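/- arXiv:1705.09793 — 4 statements merged into one kernel-verified Lean document; each statement's English description precedes it below -/
import Mathlib

section
/- Let C be an n×n symmetric real matrix such that C − m(C)·J_n is positive semidefinite, where m(C) is the mean of the entries of C. If C is positive definite and βᵀ(C − m(C)·J_n)β = 0 for some vector β ∈ ℝⁿ, then β is proportional to the all-ones vector 1_n. -/
/-!
Write `J` for the all-ones matrix and `A = C - m(C) • J`. Since `A ⪰ 0`, a vector `x` with
`xᵀ A x = 0` lies in the kernel of `A`; this holds for `β` by assumption and for `1` because
`1ᵀ A 1 = ∑ C - m(C) n² = 0`. On the kernel of `A` the matrix `C` acts as `m(C) • J`, so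
`C β = m(C) (∑ β) • 1 = C ((∑ β / n) • 1)`, and `C` is injective, being positive definite.
-/

namespace Matrix

variable {ι κ R : Type*} [Fintype ι]

lemma of_const_one_mulVec [NonAssocSemiring R] (v : ι → R) :
    of (fun (_ : κ) (_ : ι) => (1 : R)) *ᵥ v = fun _ => ∑ i, v i := by
  ext
  simp [mulVec, dotProduct]

variable {C : Matrix ι ι ℝ} {m : ℝ}

lemma mulVec_eq_of_dotProduct_sub_smul_mulVec_eq_zero
    (hpsd : (C - m • of (fun _ _ => (1 : ℝ))).PosSemidef) {x : ι → ℝ}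
    (hx : x ⬝ᵥ ((C - m • of (fun _ _ => (1 : ℝ))) *ᵥ x) = 0) :
    C *ᵥ x = (m * ∑ i, x i) • 1 := by
  have hker := (hpsd.dotProduct_mulVec_zero_iff x).mp hx
  rw [sub_mulVec, smul_mulVec, of_const_one_mulVec, sub_eq_zero] at hker
  rw [hker]
  ext
  simp

lemma one_dotProduct_sub_mean_smul_mulVec_one [Nonempty ι]
    (hm : m = (∑ i, ∑ j, C i j) / (Fintype.card ι : ℝ) ^ 2) :
    (1 : ι → ℝ) ⬝ᵥ ((C - m • of (fun _ _ => (1 : ℝ))) *ᵥ 1) = 0 := by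
  have hC : (1 : ι → ℝ) ⬝ᵥ (C *ᵥ 1) = ∑ i, ∑ j, C i j := by
    simp [mulVec, dotProduct]
  have hJ : (1 : ι → ℝ) ⬝ᵥ (of (fun (_ _ : ι) => (1 : ℝ)) *ᵥ 1) =
      (Fintype.card ι : ℝ) ^ 2 := by
    simp [of_const_one_mulVec, one_dotProduct, sq]
  have hcard : (Fintype.card ι : ℝ) ≠ 0 := by positivity
  rw [sub_mulVec, smul_mulVec, dotProduct_sub, dotProduct_smul, hC, hJ, hm, smul_eq_mul,
    div_mul_cancel₀ _ (pow_ne_zero 2 hcard), sub_self]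

lemma mulVec_one_eq_of_posSemidef_sub_mean_smul [Nonempty ι]
    (hpsd : (C - m • of (fun _ _ => (1 : ℝ))).PosSemidef)
    (hm : m = (∑ i, ∑ j, C i j) / (Fintype.card ι : ℝ) ^ 2) :
    C *ᵥ 1 = (m * Fintype.card ι) • 1 := by
  simpa using mulVec_eq_of_dotProduct_sub_smul_mulVec_eq_zero hpsd
    (one_dotProduct_sub_mean_smul_mulVec_one hm)

end Matrix

open Matrix in
theorem null_vector_constant_general (n : ℕ) (hn : 1 ≤ n)
    (C : Matrix (Fin n) (Fin n) ℝ)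
    (m : ℝ) (hm : m = (∑ i, ∑ j, C i j) / ((n : ℝ) ^ 2))
    (hpsd : (C - m • Matrix.of (fun _ _ => (1 : ℝ))).PosSemidef)
    (hpd : C.PosDef) (β : Fin n → ℝ)
    (hβ : β ⬝ᵥ ((C - m • Matrix.of (fun _ _ => (1 : ℝ))) *ᵥ β) = 0) :
    ∃ t : ℝ, β = fun _ => t := by
  have : Nonempty (Fin n) := Fin.pos_iff_nonempty.mp hn
  have hC1 : C *ᵥ 1 = (m * n) • 1 := by
    simpa using mulVec_one_eq_of_posSemidef_sub_mean_smul hpsd (by simpa using hm)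
  refine ⟨(∑ i, β i) / n, mulVec_injective_iff_isUnit.mpr hpd.isUnit ?_⟩
  calc C *ᵥ β = (m * ∑ i, β i) • 1 := mulVec_eq_of_dotProduct_sub_smul_mulVec_eq_zero hpsd hβ
    _ = ((∑ i, β i) / n) • C *ᵥ 1 := by
      rw [hC1, smul_smul]
      field_simp
    _ = C *ᵥ fun _ => (∑ i, β i) / n := by
      rw [← mulVec_smul]
      congr 1
      ext
      simp

open Matrix in
/-- If `C` is symmetric with `C - m(C)·J ⪰ 0`, `C` is positive definite and
`βᵀ (C - m(C)·J) β = 0`, then `β` is proportional to the all-ones vector. -/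
theorem null_vector_constant (n : ℕ) (hn : 1 ≤ n)
    (C : Matrix (Fin n) (Fin n) ℝ) (hCsymm : C.IsSymm)
    (m : ℝ) (hm : m = (∑ i, ∑ j, C i j) / ((n : ℝ) ^ 2))
    (hpsd : (C - m • Matrix.of (fun _ _ => (1 : ℝ))).PosSemidef)
    (hpd : C.PosDef) (β : Fin n → ℝ)
    (hβ : β ⬝ᵥ ((C - m • Matrix.of (fun _ _ => (1 : ℝ))) *ᵥ β) = 0) :
    ∃ t : ℝ, β = fun _ => t :=
  null_vector_constant_general n hn C m hm hpsd hpd β hβ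
end

section
/- Let A be an n×n symmetric matrix partitioned into p×p blocks according to a partition of {1,…,n} into groups of sizes n_1,…,n_p, such that all off-diagonal blocks A_{k,ℓ} (k≠ℓ) are constant matrices, and each diagonal block A_{k,k} satisfies A_{k,k} − m(A_{k,k})·J_{n_k} is positive semidefinite. Then A is positive semidefinite if and only if the p×p block average matrix φ(A) is positive semidefinite and every diagonal block A_{k,k} is positive semidefinite. -/
/-!
Write `E` for the `n × p` incidence matrix of the partition (`E a k = 1` iff `a ∈ G_k`). Since the
off-diagonal blocks are constant, `A = E φ(A) Eᴴ + diag_k (A_{k,k} - m(A_{k,k}) J)`, a sum of two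
positive semidefinite matrices when `φ(A) ⪰ 0`. Conversely `φ(A) = Dᴴ A D` with `D = E diag(1/n_k)`,
and the diagonal blocks are principal submatrices of `A`.
-/

open Matrix

namespace Matrix

variable {ι : Type*} {κ : ι → Type*}

section Field

variable {𝕜 : Type*} [Field 𝕜] [∀ k, Fintype (κ k)]

def blockMean (A : Matrix (Σ k, κ k) (Σ k, κ k) 𝕜) : Matrix ι ι 𝕜 :=
  of fun k l => ((Fintype.card (κ k) : 𝕜) * Fintype.card (κ l))⁻¹ * ∑ i, ∑ j, A ⟨k, i⟩ ⟨l, j⟩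

theorem blockMean_apply_of_forall_eq [CharZero 𝕜] (A : Matrix (Σ k, κ k) (Σ k, κ k) 𝕜)
    {k l : ι} {i : κ k} {j : κ l} (h : ∀ i' j', A ⟨k, i'⟩ ⟨l, j'⟩ = A ⟨k, i⟩ ⟨l, j⟩) :
    blockMean A k l = A ⟨k, i⟩ ⟨l, j⟩ := by
  have : Nonempty (κ k) := ⟨i⟩
  have : Nonempty (κ l) := ⟨j⟩
  simp only [blockMean, of_apply, h, Finset.sum_const, Finset.card_univ, nsmul_eq_mul]
  field_simp

end Field

variable [DecidableEq ι]

section Semiring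

variable {R : Type*} [Semiring R]

variable (κ R) in
def blockIndicator : Matrix (Σ k, κ k) ι R :=
  of fun a k => if a.1 = k then 1 else 0

theorem blockIndicator_mul_apply [Fintype ι] {m : Type*} (B : Matrix ι m R) (a : Σ k, κ k)
    (j : m) : (blockIndicator κ R * B) a j = B a.1 j := by
  simp [blockIndicator, mul_apply]

theorem mul_blockIndicator_apply [Fintype ι] [∀ k, Fintype (κ k)] {m : Type*}
    (M : Matrix m (Σ k, κ k) R) (i : m) (l : ι) :
    (M * blockIndicator κ R) i l = ∑ j, M i ⟨l, j⟩ := by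
  rw [mul_apply, Fintype.sum_sigma,
    Fintype.sum_eq_single l fun k hk => by simp [blockIndicator, hk]]
  simp [blockIndicator]

variable [StarRing R]

theorem mul_conjTranspose_blockIndicator_apply [Fintype ι] {m : Type*} (M : Matrix m ι R)
    (i : m) (b : Σ k, κ k) : (M * (blockIndicator κ R)ᴴ) i b = M i b.1 := by
  simp [blockIndicator, mul_apply, apply_ite star]

theorem conjTranspose_blockIndicator_mul_apply [Fintype ι] [∀ k, Fintype (κ k)] {m : Type*}
    (M : Matrix (Σ k, κ k) m R) (k : ι) (j : m) :
    ((blockIndicator κ R)ᴴ * M) k j = ∑ i, M ⟨k, i⟩ j := by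
  rw [mul_apply, Fintype.sum_sigma,
    Fintype.sum_eq_single k fun l hl => by simp [blockIndicator, hl]]
  simp [blockIndicator]

end Semiring

section StarField

variable {𝕜 : Type*} [Field 𝕜] [StarRing 𝕜] [Fintype ι] [∀ k, Fintype (κ k)]

theorem blockMean_eq_diagonal_mul_mul_diagonal (A : Matrix (Σ k, κ k) (Σ k, κ k) 𝕜) :
    blockMean A = diagonal (fun k => (Fintype.card (κ k) : 𝕜)⁻¹) *
      ((blockIndicator κ 𝕜)ᴴ * A * blockIndicator κ 𝕜) *
        diagonal (fun k => (Fintype.card (κ k) : 𝕜)⁻¹) := by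
  ext k l
  simp only [blockMean, of_apply, diagonal_mul, mul_diagonal, mul_blockIndicator_apply,
    conjTranspose_blockIndicator_mul_apply, mul_inv]
  rw [Finset.sum_comm]
  ring

theorem eq_blockIndicator_mul_blockMean_mul_add_blockDiagonal' [CharZero 𝕜]
    {A : Matrix (Σ k, κ k) (Σ k, κ k) 𝕜}
    (hoff : ∀ k l, k ≠ l → ∀ (i i' : κ k) (j j' : κ l), A ⟨k, i⟩ ⟨l, j⟩ = A ⟨k, i'⟩ ⟨l, j'⟩) :
    A = blockIndicator κ 𝕜 * blockMean A * (blockIndicator κ 𝕜)ᴴ +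
      blockDiagonal' fun k =>
        A.submatrix (Sigma.mk k) (Sigma.mk k) - blockMean A k k • of fun _ _ => 1 := by
  ext ⟨k, i⟩ ⟨l, j⟩
  rw [add_apply, mul_conjTranspose_blockIndicator_apply, blockIndicator_mul_apply]
  obtain rfl | hkl := eq_or_ne k l
  · simp [blockDiagonal'_apply_eq]
  · rw [blockDiagonal'_apply_ne _ _ _ hkl, add_zero,
      blockMean_apply_of_forall_eq A fun i' j' => hoff k l hkl i' i j' j]

end StarField

section RCLike

open scoped ComplexOrder

variable {𝕜 : Type*} [RCLike 𝕜] [Fintype ι] [∀ k, Fintype (κ k)]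

theorem PosSemidef.blockMean {A : Matrix (Σ k, κ k) (Σ k, κ k) 𝕜} (hA : A.PosSemidef) :
    (Matrix.blockMean A).PosSemidef := by
  rw [blockMean_eq_diagonal_mul_mul_diagonal]
  simpa [diagonal_conjTranspose, Pi.star_def] using
    (hA.conjTranspose_mul_mul_same (blockIndicator κ 𝕜)).conjTranspose_mul_mul_same
      (diagonal fun k => (Fintype.card (κ k) : 𝕜)⁻¹)

theorem PosSemidef.blockDiagonal' {M : ∀ k, Matrix (κ k) (κ k) 𝕜}
    (hM : ∀ k, (M k).PosSemidef) : (Matrix.blockDiagonal' M).PosSemidef := by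
  refine .of_dotProduct_mulVec_nonneg (isHermitian_blockDiagonal'_iff.2 fun k => (hM k).1)
    fun x => ?_
  have hquad : star x ⬝ᵥ Matrix.blockDiagonal' M *ᵥ x =
      ∑ k, star (fun i => x ⟨k, i⟩) ⬝ᵥ M k *ᵥ fun i => x ⟨k, i⟩ := by
    simp only [dotProduct, mulVec, Fintype.sum_sigma]
    refine Finset.sum_congr rfl fun k _ => Finset.sum_congr rfl fun i _ => congrArg _ ?_
    rw [Fintype.sum_eq_single k fun l hl => by simp [blockDiagonal'_apply_ne _ _ _ hl.symm]]
    simp [blockDiagonal'_apply_eq]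
  rw [hquad]
  exact Finset.sum_nonneg fun k _ => (hM k).dotProduct_mulVec_nonneg _

theorem posSemidef_iff_posSemidef_blockMean_and_submatrix {A : Matrix (Σ k, κ k) (Σ k, κ k) 𝕜}
    (hoff : ∀ k l, k ≠ l → ∀ (i i' : κ k) (j j' : κ l), A ⟨k, i⟩ ⟨l, j⟩ = A ⟨k, i'⟩ ⟨l, j'⟩)
    (hdiag : ∀ k, (A.submatrix (Sigma.mk k) (Sigma.mk k) -
      blockMean A k k • of fun _ _ => (1 : 𝕜)).PosSemidef) :
    A.PosSemidef ↔
      (blockMean A).PosSemidef ∧ ∀ k, (A.submatrix (Sigma.mk k) (Sigma.mk k)).PosSemidef := by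
  refine ⟨fun hA => ⟨hA.blockMean, fun k => hA.submatrix _⟩, fun ⟨hmean, _⟩ => ?_⟩
  rw [eq_blockIndicator_mul_blockMean_mul_add_blockDiagonal' hoff]
  exact (hmean.mul_mul_conjTranspose_same _).add (.blockDiagonal' hdiag)

end RCLike

end Matrix

open Matrix in
theorem blockClassG_posSemidef_iff_general (p : ℕ) (n : Fin p → ℕ)
    (A : Matrix ((k : Fin p) × Fin (n k)) ((k : Fin p) × Fin (n k)) ℝ)
    (hoff : ∀ k l : Fin p, k ≠ l → ∀ (i i' : Fin (n k)) (j j' : Fin (n l)),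
      A ⟨k, i⟩ ⟨l, j⟩ = A ⟨k, i'⟩ ⟨l, j'⟩)
    (hdiag : ∀ k : Fin p,
      (Matrix.of (fun i j : Fin (n k) => A ⟨k, i⟩ ⟨k, j⟩) -
        ((∑ i : Fin (n k), ∑ j : Fin (n k), A ⟨k, i⟩ ⟨k, j⟩) / ((n k : ℝ) ^ 2)) •
          Matrix.of (fun _ _ => (1 : ℝ))).PosSemidef) :
    A.PosSemidef ↔
      ((Matrix.of (fun k l : Fin p => (1 / ((n k : ℝ) * (n l : ℝ))) *
          ∑ i : Fin (n k), ∑ j : Fin (n l), A ⟨k, i⟩ ⟨l, j⟩)).PosSemidef ∧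
        ∀ k : Fin p,
          (Matrix.of (fun i j : Fin (n k) => A ⟨k, i⟩ ⟨k, j⟩)).PosSemidef) := by
  have hmean : (Matrix.of fun k l : Fin p => (1 / ((n k : ℝ) * (n l : ℝ))) *
      ∑ i : Fin (n k), ∑ j : Fin (n l), A ⟨k, i⟩ ⟨l, j⟩) = blockMean A := by
    ext k l
    simp [blockMean]
  have hmean_diag (k : Fin p) :
      (∑ i : Fin (n k), ∑ j : Fin (n k), A ⟨k, i⟩ ⟨k, j⟩) / ((n k : ℝ) ^ 2) = blockMean A k k := by
    rw [← hmean, of_apply]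
    ring
  simp_rw [hmean_diag] at hdiag
  rw [hmean]
  exact posSemidef_iff_posSemidef_blockMean_and_submatrix hoff hdiag

open Matrix in
/-- Theorem 1, statement 1: for a symmetric block matrix `A` with constant
off-diagonal blocks and diagonal blocks `A_{k,k}` satisfying
`A_{k,k} - m(A_{k,k})·J ⪰ 0`, `A` is positive semidefinite iff the block
average matrix `φ(A)` is positive semidefinite and every diagonal block is
positive semidefinite. -/
theorem blockClassG_posSemidef_iff (p : ℕ) (n : Fin p → ℕ) (hn : ∀ k, 0 < n k)
    (A : Matrix ((k : Fin p) × Fin (n k)) ((k : Fin p) × Fin (n k)) ℝ)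
    (hsymm : A.IsSymm)
    (hoff : ∀ k l : Fin p, k ≠ l → ∀ (i i' : Fin (n k)) (j j' : Fin (n l)),
      A ⟨k, i⟩ ⟨l, j⟩ = A ⟨k, i'⟩ ⟨l, j'⟩)
    (hdiag : ∀ k : Fin p,
      (Matrix.of (fun i j : Fin (n k) => A ⟨k, i⟩ ⟨k, j⟩) -
        ((∑ i : Fin (n k), ∑ j : Fin (n k), A ⟨k, i⟩ ⟨k, j⟩) / ((n k : ℝ) ^ 2)) •
          Matrix.of (fun _ _ => (1 : ℝ))).PosSemidef) :
    A.PosSemidef ↔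
      ((Matrix.of (fun k l : Fin p => (1 / ((n k : ℝ) * (n l : ℝ))) *
          ∑ i : Fin (n k), ∑ j : Fin (n l), A ⟨k, i⟩ ⟨l, j⟩)).PosSemidef ∧
        ∀ k : Fin p,
          (Matrix.of (fun i j : Fin (n k) => A ⟨k, i⟩ ⟨k, j⟩)).PosSemidef) :=
  blockClassG_posSemidef_iff_general p n A hoff hdiag
end

section
/- Let d_p(c) = det(B(c)) where B(c) has diagonal entries 0 < α_1 ≤ … ≤ α_p < 1 and off-diagonal entries c, with p ≥ 2. Then d_p has exactly p real roots r_{p,1} ≤ r_{p,2} ≤ … ≤ r_{p,p}, interlaced as r_{p,1} < 0 < α_1 ≤ r_{p,2} ≤ α_2 ≤ … ≤ r_{p,p} ≤ α_p < 1. -/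
/-!
By the matrix determinant lemma, `d(c) = ∏ₖ (αₖ - c) + c ∑ₖ ∏_{j ≠ k} (αⱼ - c)`.
For strictly increasing `α` this gives `d(αₖ) = αₖ ∏_{j ≠ k} (αⱼ - αₖ)`, whose signs alternate,
and `d(-1) < 0 < d(0)`; the intermediate value theorem yields `p` distinct roots, one in
`(-1, 0)` and one in each `(αₖ₋₁, αₖ)`, and these determine `d`, a polynomial of degree `p` with
leading coefficient `(-1)^(p-1) (p-1)`. A monotone `α` is a limit of strictly increasing ones;
their root vectors lie in the compact cube `[-1, 1]^p` and the non-strict interlacing together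
with the factorization is a closed condition, so it passes to a limit point. Finally
`r₁ ≠ 0` because `d(0) = ∏ₖ αₖ > 0`.
-/

open Polynomial Finset Filter Topology

namespace Polynomial

theorem eq_C_mul_prod_X_sub_C_of_injective {R : Type*} [CommRing R] [IsDomain R] {n : ℕ}
    {f : R[X]} (hf : f.natDegree ≤ n) {r : Fin n → R} (hr : Function.Injective r)
    (hroot : ∀ i, f.IsRoot (r i)) : f = C (f.coeff n) * ∏ i, (X - C (r i)) := by
  have hmonic : (∏ i, (X - C (r i))).Monic := monic_prod_of_monic _ _ fun i _ => monic_X_sub_C _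
  have hdeg : (∏ i, (X - C (r i))).natDegree = n := by
    rw [natDegree_prod_of_monic _ _ fun i _ => monic_X_sub_C _]; simp
  have hlead : (∏ i, (X - C (r i))).coeff n = 1 := by
    rw [← hmonic.coeff_natDegree, hdeg]
  refine eq_of_degree_sub_lt_of_eval_finset_eq (univ.map ⟨r, hr⟩) ?_ ?_
  · rw [card_map, card_univ, Fintype.card_fin, degree_lt_iff_coeff_zero]
    intro m hm
    rcases hm.eq_or_lt with rfl | hlt
    · rw [coeff_sub, coeff_C_mul, hlead, mul_one, sub_self]
    · rw [coeff_sub, coeff_C_mul, coeff_eq_zero_of_natDegree_lt (hf.trans_lt hlt),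
        coeff_eq_zero_of_natDegree_lt (hdeg.trans_lt hlt), mul_zero, sub_zero]
  · simp only [Finset.mem_map, mem_univ, true_and, Function.Embedding.coeFn_mk,
      forall_exists_index, forall_apply_eq_imp_iff]
    intro i
    rw [hroot i, eval_mul, eval_prod, prod_eq_zero (mem_univ i) (by simp), mul_zero]

theorem exists_mem_Ioo_isRoot_of_eval_mul_neg {f : ℝ[X]} {x y : ℝ} (hxy : x ≤ y)
    (h : f.eval x * f.eval y < 0) : ∃ z ∈ Set.Ioo x y, f.IsRoot z := by
  have hcont := f.continuous.continuousOn (s := Set.Icc x y)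
  rcases mul_neg_iff.1 h with ⟨hx, hy⟩ | ⟨hx, hy⟩
  · exact intermediate_value_Ioo' hxy hcont ⟨hy, hx⟩
  · exact intermediate_value_Ioo hxy hcont ⟨hx, hy⟩

theorem natDegree_prod_C_sub_X_le {R ι : Type*} [CommRing R] (s : Finset ι) (a : ι → R) :
    (∏ j ∈ s, (C (a j) - X)).natDegree ≤ #s := by
  refine (natDegree_prod_le ..).trans <| (sum_le_card_nsmul s _ 1 fun j _ => ?_).trans (by simp)
  compute_degree

theorem coeff_prod_C_sub_X_card {R ι : Type*} [CommRing R] (s : Finset ι) (a : ι → R) :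
    (∏ j ∈ s, (C (a j) - X)).coeff #s = (-1) ^ #s := by
  have := coeff_prod_of_natDegree_le s (fun j => C (a j) - X) 1 fun j _ => by compute_degree
  simpa [coeff_C, coeff_X] using this

end Polynomial

theorem exists_strictMono_seq_tendsto_of_monotone {m : ℕ} {α : Fin m → ℝ} (hmono : Monotone α)
    (hpos : ∀ k, 0 < α k) (hlt : ∀ k, α k < 1) :
    ∃ β : ℕ → Fin m → ℝ, Tendsto β atTop (𝓝 α) ∧
      ∀ N, StrictMono (β N) ∧ (∀ k, 0 < β N k) ∧ ∀ k, β N k < 1 := by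
  set γ : Fin m → ℝ := fun k => ((k : ℝ) + 1) / (m + 1)
  have hγ : StrictMono γ := fun k l hkl => by
    simp only [γ]; gcongr; exact_mod_cast hkl
  have hγpos : ∀ k, 0 < γ k := fun k => by positivity
  have hγlt : ∀ k, γ k < 1 := fun k => by
    rw [div_lt_one (by positivity)]; exact_mod_cast (by omega : (k : ℕ) + 1 < m + 1)
  set t : ℕ → ℝ := fun N => 1 / ((N : ℝ) + 1)
  have ht : Tendsto t atTop (𝓝 0) := tendsto_one_div_add_atTop_nhds_zero_nat
  have htpos : ∀ N, 0 < t N := fun N => by positivity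
  have htle : ∀ N, t N ≤ 1 := fun N => by
    rw [div_le_one (by positivity)]; linarith [N.cast_nonneg (α := ℝ)]
  refine ⟨fun N k => (1 - t N) * α k + t N * γ k, tendsto_pi_nhds.2 fun k => ?_,
    fun N => ⟨fun k l hkl => ?_, fun k => ?_, fun k => ?_⟩⟩
  · simpa using ((tendsto_const_nhds (x := (1 : ℝ)) |>.sub ht).mul_const (α k)).add
      (ht.mul_const (γ k))
  · have := mul_le_mul_of_nonneg_left (hmono hkl.le) (sub_nonneg.2 (htle N))
    have := mul_lt_mul_of_pos_left (hγ hkl) (htpos N)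
    linarith
  · have := mul_nonneg (sub_nonneg.2 (htle N)) (hpos k).le
    have := mul_pos (htpos N) (hγpos k)
    linarith
  · have := mul_le_mul_of_nonneg_left (hlt k).le (sub_nonneg.2 (htle N))
    have := mul_lt_mul_of_pos_left (hγlt k) (htpos N)
    linarith

namespace ConstOffDiagonal

variable {ι : Type*} [Fintype ι] [DecidableEq ι]

theorem det_of_forall_ne {K : Type*} [Field K] (a : ι → K) {c : K} (hc : ∀ k, a k ≠ c) :
    (Matrix.of fun k l : ι => if k = l then a k else c).det =
      ∏ k, (a k - c) + c * ∑ k, ∏ j ∈ univ.erase k, (a j - c) := by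
  have hsub : ∀ k, a k - c ≠ 0 := fun k => sub_ne_zero.2 (hc k)
  have hfactor : (Matrix.of fun k l : ι => if k = l then a k else c) =
      Matrix.diagonal (fun k => a k - c) * (1 + Matrix.replicateCol Unit (fun k => c / (a k - c)) *
        Matrix.replicateRow Unit (fun _ => (1 : K))) := by
    ext k l
    rw [Matrix.diagonal_mul]
    simp only [Matrix.add_apply, Matrix.mul_apply, Matrix.one_apply, Matrix.of_apply,
      Matrix.replicateCol_apply, Matrix.replicateRow_apply, Fintype.sum_unique, mul_one, mul_add,
      mul_div_cancel₀ _ (hsub k)]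
    split_ifs <;> ring
  rw [hfactor, Matrix.det_mul, Matrix.det_diagonal,
    Matrix.det_one_add_replicateCol_mul_replicateRow]
  simp only [dotProduct, one_mul, mul_add, mul_one, mul_sum]
  congr 1
  refine sum_congr rfl fun k _ => ?_
  rw [← mul_prod_erase univ _ (mem_univ k), mul_div_assoc', mul_div_right_comm,
    mul_div_cancel_left₀ _ (hsub k), mul_comm]

noncomputable def detPoly (a : ι → ℝ) : ℝ[X] :=
  ∏ k, (C (a k) - X) + X * ∑ k, ∏ j ∈ univ.erase k, (C (a j) - X)

theorem eval_detPoly (a : ι → ℝ) (c : ℝ) :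
    (detPoly a).eval c = ∏ k, (a k - c) + c * ∑ k, ∏ j ∈ univ.erase k, (a j - c) := by
  simp [detPoly, eval_prod, eval_finsetSum]

theorem det_eq_eval_detPoly (a : ι → ℝ) (c : ℝ) :
    (Matrix.of fun k l : ι => if k = l then a k else c).det = (detPoly a).eval c := by
  have hdense : Dense (Set.range a)ᶜ := (Set.finite_range a).countable.dense_compl ℝ
  have hdet : Continuous fun c : ℝ => (Matrix.of fun k l : ι => if k = l then a k else c).det :=
    Continuous.matrix_det <| continuous_pi fun k => continuous_pi fun l => by
      simp only [Matrix.of_apply]; split_ifs <;> fun_prop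
  refine congrFun (hdet.ext_on hdense (detPoly a).continuous fun c hc => ?_) c
  exact (det_of_forall_ne a fun k hk => hc ⟨k, hk⟩).trans (eval_detPoly a c).symm

theorem natDegree_detPoly_le {n : ℕ} (a : ι → ℝ) (hn : Fintype.card ι = n + 1) :
    (detPoly a).natDegree ≤ n + 1 := by
  have herase : ∀ k : ι, #(univ.erase k) = n := fun k => by
    rw [card_erase_of_mem (mem_univ k), card_univ, hn, Nat.add_sub_cancel]
  refine natDegree_add_le_of_degree_le (hn ▸ natDegree_prod_C_sub_X_le _ a) ?_
  refine natDegree_mul_le.trans ?_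
  rw [natDegree_X, add_comm]
  gcongr
  exact natDegree_sum_le_of_forall_le _ _ fun k _ => herase k ▸ natDegree_prod_C_sub_X_le _ a

theorem coeff_detPoly {n : ℕ} (a : ι → ℝ) (hn : Fintype.card ι = n + 1) :
    (detPoly a).coeff (n + 1) = (-1) ^ n * n := by
  have herase : ∀ k : ι, (∏ j ∈ univ.erase k, (C (a j) - X)).coeff n = (-1) ^ n := fun k => by
    have hcard : #(univ.erase k) = n := by
      rw [card_erase_of_mem (mem_univ k), card_univ, hn, Nat.add_sub_cancel]
    rw [← hcard, coeff_prod_C_sub_X_card]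
  rw [detPoly, coeff_add, coeff_X_mul, finsetSum_coeff, ← hn, ← card_univ,
    coeff_prod_C_sub_X_card, card_univ, hn]
  simp only [herase, sum_const, card_univ, hn, nsmul_eq_mul]
  push_cast
  ring

theorem eval_detPoly_zero (a : ι → ℝ) : (detPoly a).eval 0 = ∏ k, a k := by
  simp [eval_detPoly]

theorem eval_detPoly_at_node (a : ι → ℝ) (k : ι) :
    (detPoly a).eval (a k) = a k * ∏ j ∈ univ.erase k, (a j - a k) := by
  rw [eval_detPoly, prod_eq_zero (mem_univ k) (sub_self _), zero_add, sum_eq_single k]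
  · intro l _ hlk
    exact prod_eq_zero (mem_erase.2 ⟨Ne.symm hlk, mem_univ k⟩) (sub_self _)
  · simp

theorem eval_detPoly_mul_eval_detPoly_neg (a : ι → ℝ) {i j : ι} (hij : a i ≠ a j)
    (hi : 0 < a i) (hj : 0 < a j)
    (hgap : ∀ l, l ≠ i → l ≠ j → 0 < (a l - a i) * (a l - a j)) :
    (detPoly a).eval (a i) * (detPoly a).eval (a j) < 0 := by
  have hji : j ∈ univ.erase i := mem_erase.2 ⟨fun h => hij (congrArg a h).symm, mem_univ j⟩
  have hij' : i ∈ univ.erase j := mem_erase.2 ⟨fun h => hij (congrArg a h), mem_univ i⟩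
  have hprod : 0 < ∏ l ∈ (univ.erase i).erase j, ((a l - a i) * (a l - a j)) :=
    prod_pos fun l hl => hgap l (mem_erase.1 (mem_erase.1 hl).2).1 (mem_erase.1 hl).1
  have key : (detPoly a).eval (a i) * (detPoly a).eval (a j) =
      -(a i * a j * (a i - a j) ^ 2 *
        ∏ l ∈ (univ.erase i).erase j, ((a l - a i) * (a l - a j))) := by
    rw [eval_detPoly_at_node, eval_detPoly_at_node, ← mul_prod_erase _ _ hji,
      ← mul_prod_erase _ _ hij', erase_right_comm (a := j), prod_mul_distrib]
    ring
  rw [key, neg_lt_zero]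
  have := sub_ne_zero.2 hij
  positivity

theorem eval_detPoly_neg_one_neg (a : ι → ℝ) (hcard : 2 ≤ Fintype.card ι) (ha : ∀ k, -1 < a k)
    (ha' : ∀ k, a k < 1) : (detPoly a).eval (-1) < 0 := by
  have hpos : ∀ s : Finset ι, 0 < ∏ j ∈ s, (a j + 1) := fun s =>
    prod_pos fun j _ => by linarith [ha j]
  have hne : (univ : Finset ι).Nonempty :=
    univ_nonempty_iff.2 (Fintype.card_pos_iff.1 (by omega))
  have hlt : Fintype.card ι * ∏ k, (a k + 1) < 2 * ∑ k, ∏ j ∈ univ.erase k, (a j + 1) := by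
    rw [← card_univ, ← nsmul_eq_mul, ← sum_const, mul_sum]
    refine sum_lt_sum_of_nonempty hne fun k _ => ?_
    rw [← mul_prod_erase _ _ (mem_univ k)]
    exact mul_lt_mul_of_pos_right (by linarith [ha' k]) (hpos _)
  have hcard' : 2 * ∏ k, (a k + 1) ≤ Fintype.card ι * ∏ k, (a k + 1) :=
    mul_le_mul_of_nonneg_right (by exact_mod_cast hcard) (hpos _).le
  simp only [eval_detPoly, sub_neg_eq_add]
  linarith

/-- The inequalities are non-strict so that this is a closed condition on `(a, r)`. -/
def InterlacedRoots {n : ℕ} (a r : Fin (n + 1) → ℝ) : Prop :=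
  (∀ c, (detPoly a).eval c = (-1) ^ n * n * ∏ i, (c - r i)) ∧ r 0 ≤ 0 ∧ (∀ i, r i ≤ a i) ∧
    ∀ i : Fin n, a i.castSucc ≤ r i.succ

theorem isClosed_setOf_interlacedRoots (n : ℕ) :
    IsClosed {x : (Fin (n + 1) → ℝ) × (Fin (n + 1) → ℝ) | InterlacedRoots x.1 x.2} := by
  simp only [InterlacedRoots, Set.ofPred_and, Set.ofPred_forall, eval_detPoly]
  refine (isClosed_iInter fun c => isClosed_eq ?_ ?_).inter <| (isClosed_le ?_ ?_).inter <|
    (isClosed_iInter fun i => isClosed_le ?_ ?_).inter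
      (isClosed_iInter fun i => isClosed_le ?_ ?_) <;>
  fun_prop

theorem exists_interlacedRoots_of_strictMono {n : ℕ} (hn : 1 ≤ n) {β : Fin (n + 1) → ℝ}
    (hβ : StrictMono β) (hpos : ∀ k, 0 < β k) (hlt : ∀ k, β k < 1) :
    ∃ r ∈ Set.Icc (-1) 1, InterlacedRoots β r := by
  obtain ⟨x₀, hx₀, hroot₀⟩ := exists_mem_Ioo_isRoot_of_eval_mul_neg (f := detPoly β)
    (x := -1) (y := 0) (by norm_num) <| mul_neg_of_neg_of_pos
      (eval_detPoly_neg_one_neg β (by simp; omega) (fun k => by linarith [hpos k]) hlt)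
      (by rw [eval_detPoly_zero]; exact prod_pos fun k _ => hpos k)
  have hmid : ∀ i : Fin n, ∃ x ∈ Set.Ioo (β i.castSucc) (β i.succ), (detPoly β).IsRoot x := by
    intro i
    refine exists_mem_Ioo_isRoot_of_eval_mul_neg (hβ Fin.castSucc_lt_succ).le <|
      eval_detPoly_mul_eval_detPoly_neg β (hβ Fin.castSucc_lt_succ).ne (hpos _) (hpos _)
        fun l hl hl' => ?_
    rcases lt_or_gt_of_ne hl with hlt | hgt
    · exact mul_pos_of_neg_of_neg (sub_neg.2 (hβ hlt))
        (sub_neg.2 (hβ (hlt.trans Fin.castSucc_lt_succ)))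
    · have : i.succ < l := (Fin.castSucc_lt_iff_succ_le.1 hgt).lt_of_ne (Ne.symm hl')
      exact mul_pos (sub_pos.2 (hβ (Fin.castSucc_lt_succ.trans this))) (sub_pos.2 (hβ this))
  choose x hx hroot using hmid
  set r : Fin (n + 1) → ℝ := Fin.cons x₀ x
  have hle : ∀ i, r i < β i := Fin.cases (hx₀.2.trans (hpos 0)) fun i => (hx i).2
  have hge : ∀ i : Fin n, β i.castSucc < r i.succ := fun i => (hx i).1
  have hr : StrictMono r := Fin.strictMono_iff_lt_succ.2 fun i => (hle _).trans (hge i)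
  have hfactor := eq_C_mul_prod_X_sub_C_of_injective (natDegree_detPoly_le β (by simp))
    hr.injective (Fin.cases hroot₀ hroot)
  rw [coeff_detPoly β (by simp)] at hfactor
  refine ⟨r, Set.mem_Icc.2 ⟨fun i => hx₀.1.le.trans (hr.monotone (Fin.zero_le i)),
    fun i => (hle i).le.trans (hlt i).le⟩, fun c => ?_, hx₀.2.le, fun i => (hle i).le,
    fun i => (hge i).le⟩
  rw [hfactor]
  simp [eval_prod]

theorem exists_interlacedRoots {n : ℕ} (hn : 1 ≤ n) {α : Fin (n + 1) → ℝ} (hmono : Monotone α)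
    (hpos : ∀ k, 0 < α k) (hlt : ∀ k, α k < 1) : ∃ r, InterlacedRoots α r := by
  obtain ⟨β, hβα, hβ⟩ := exists_strictMono_seq_tendsto_of_monotone hmono hpos hlt
  choose R hR hroots using fun N =>
    exists_interlacedRoots_of_strictMono hn (hβ N).1 (hβ N).2.1 (hβ N).2.2
  obtain ⟨r, -, φ, hφ, hRr⟩ := isCompact_Icc.tendsto_subseq hR
  have hlim : Tendsto (fun N => (β (φ N), R (φ N))) atTop (𝓝 (α, r)) :=
    (hβα.comp hφ.tendsto_atTop).prodMk_nhds hRr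
  have hlimit := (isClosed_setOf_interlacedRoots n).mem_of_tendsto hlim
    (Eventually.of_forall fun N => hroots (φ N))
  exact ⟨r, hlimit⟩

namespace InterlacedRoots

variable {n : ℕ} {a r : Fin (n + 1) → ℝ}

theorem monotone (h : InterlacedRoots a r) : Monotone r :=
  Fin.monotone_iff_le_succ.2 fun i => (h.2.2.1 _).trans (h.2.2.2 i)

theorem zero_lt (h : InterlacedRoots a r) (hpos : ∀ k, 0 < a k) : r 0 < 0 := by
  refine h.2.1.lt_of_ne fun h0 => (prod_pos (s := univ) fun k _ => hpos k).ne' ?_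
  rw [← eval_detPoly_zero, h.1, prod_eq_zero (mem_univ 0) (by rw [h0, sub_zero]), mul_zero]

end InterlacedRoots

end ConstOffDiagonal

open ConstOffDiagonal in
/-- For `0 < α_1 ≤ … ≤ α_p < 1` (p ≥ 2), the degree-`p` polynomial
`d_p(c) = det(B(c))` (diagonal entries `α_k`, off-diagonal entries `c`) has
exactly `p` real roots `r_1 ≤ … ≤ r_p` (so that
`d_p(c) = (-1)^{p-1}(p-1) ∏ (c - r_i)`), interlaced as
`r_1 < 0 < α_1 ≤ r_2 ≤ α_2 ≤ … ≤ r_p ≤ α_p < 1`. -/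
theorem det_roots_interlaced (p : ℕ) (hp : 2 ≤ p) (α : Fin p → ℝ)
    (hmono : Monotone α) (hpos : ∀ k, 0 < α k) (hlt : ∀ k, α k < 1) :
    ∃ r : Fin p → ℝ, Monotone r ∧
      (∀ c : ℝ,
        (Matrix.of (fun k l : Fin p => if k = l then α k else c)).det =
          (-1 : ℝ) ^ (p - 1) * ((p : ℝ) - 1) * ∏ i, (c - r i)) ∧
      r ⟨0, by omega⟩ < 0 ∧
      (0 : ℝ) < α ⟨0, by omega⟩ ∧
      (∀ i j : Fin p, (j : ℕ) + 1 = (i : ℕ) → α j ≤ r i ∧ r i ≤ α i) ∧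
      (∀ i, α i < 1) := by
  obtain ⟨n, rfl⟩ : ∃ n, p = n + 1 := ⟨p - 1, by omega⟩
  obtain ⟨r, hr⟩ := exists_interlacedRoots (by omega) hmono hpos hlt
  refine ⟨r, hr.monotone, fun c => ?_, hr.zero_lt hpos, hpos _, fun i j hij => ?_, hlt⟩
  · rw [det_eq_eval_detPoly, hr.1]
    simp
  · obtain ⟨k, rfl, rfl⟩ : ∃ k : Fin n, j = k.castSucc ∧ i = k.succ :=
      ⟨⟨j, by omega⟩, rfl, Fin.ext (by simp; omega)⟩
    exact ⟨hr.2.2.2 k, hr.2.2.1 _⟩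
end

section
/- Let A ∈ B_I(p) be an n×n block correlation matrix with group sizes n_1,…,n_p, within-group correlations b_k ∈ (−1,1), common between-group correlation c ∈ (−1,1), and α_k = (1+(n_k−1)b_k)/n_k. Set α* = min_k α_k. If 0 < α_k < 1 for all k and −α*/(p−1) < c < α*, then A is positive definite. -/
/-!
Split `x` into its groups `x_k`, with sums `S_k`. The quadratic form of `A` is
`∑ₖ [(1 - b_k) ‖x_k‖² + (b_k - c) S_k²] + c (∑ₖ S_k)²`, and Cauchy–Schwarz across the `p` groups
gives `c (∑ₖ S_k)² ≥ (c - e) ∑ₖ S_k²` for `e = max c (-(p - 1) c)`. What remains is the sum of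
the quadratic forms of the group matrices `(1 - b_k) I + (b_k - e) J`, whose eigenvalues
`1 - b_k` and `n_k (α_k - e)` are positive because `e < α*`.
-/

open Matrix Finset

section Equicorrelation

variable {ι : Type*} [Fintype ι]

/-- The quadratic form of `(1 - b) • 1 + (b - e) • J`, `J` the all-ones matrix. -/
def equicorrForm (b e : ℝ) (v : ι → ℝ) : ℝ :=
  (1 - b) * ∑ i, v i ^ 2 + (b - e) * (∑ i, v i) ^ 2

theorem sq_sum_univ_le_card_mul_sum_sq (v : ι → ℝ) :
    (∑ i, v i) ^ 2 ≤ Fintype.card ι * ∑ i, v i ^ 2 := by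
  simpa using sq_sum_le_card_mul_sum_sq (s := univ) (f := v)

theorem equicorrForm_pos {b e : ℝ} (hb : b < 1)
    (he : e * Fintype.card ι < 1 + (Fintype.card ι - 1) * b) {v : ι → ℝ} (hv : v ≠ 0) :
    0 < equicorrForm b e v := by
  obtain ⟨i, hi⟩ := Function.ne_iff.mp hv
  rw [Pi.zero_apply] at hi
  have hQ : 0 < ∑ i, v i ^ 2 :=
    lt_of_lt_of_le (by positivity) (single_le_sum (fun j _ => sq_nonneg (v j)) (mem_univ i))
  have hCS := sq_sum_univ_le_card_mul_sum_sq v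
  unfold equicorrForm
  rcases le_or_gt e b with heb | hbe
  · nlinarith [sq_nonneg (∑ i, v i)]
  -- Cauchy–Schwarz bounds the form below by `(1 + (card ι - 1) b - e card ι) ∑ v²`.
  · nlinarith

theorem equicorrForm_nonneg {b e : ℝ} (hb : b < 1)
    (he : e * Fintype.card ι < 1 + (Fintype.card ι - 1) * b) (v : ι → ℝ) :
    0 ≤ equicorrForm b e v := by
  rcases eq_or_ne v 0 with rfl | hv
  · simp [equicorrForm]
  · exact (equicorrForm_pos hb he hv).le

theorem sub_mul_sum_sq_le_mul_sq_sum {c e : ℝ} (hce : c ≤ e)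
    (hpe : -(Fintype.card ι - 1) * c ≤ e) (S : ι → ℝ) :
    (c - e) * ∑ i, S i ^ 2 ≤ c * (∑ i, S i) ^ 2 := by
  have hQ : 0 ≤ ∑ i, S i ^ 2 := sum_nonneg fun i _ => sq_nonneg (S i)
  rcases le_or_gt 0 c with hc | hc
  · nlinarith [sq_nonneg (∑ i, S i)]
  · nlinarith [sq_sum_univ_le_card_mul_sum_sq S]

end Equicorrelation

section BlockCorrelation

variable {κ : Type*} [DecidableEq κ] {m : κ → Type*} [∀ k, DecidableEq (m k)]

def blockCorrMatrix (b : κ → ℝ) (c : ℝ) : Matrix (Σ k, m k) (Σ k, m k) ℝ :=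
  of fun x y => if x = y then 1 else if x.1 = y.1 then b x.1 else c

theorem blockCorrMatrix_isHermitian (b : κ → ℝ) (c : ℝ) :
    (blockCorrMatrix (m := m) b c).IsHermitian := by
  ext x y
  simp only [blockCorrMatrix, conjTranspose_apply, of_apply, star_trivial, eq_comm]
  split_ifs <;> simp_all

variable [Fintype κ] [∀ k, Fintype (m k)]

theorem blockCorrMatrix_mulVec (b : κ → ℝ) (c : ℝ) (x : (Σ k, m k) → ℝ) (k : κ) (i : m k) :
    (blockCorrMatrix b c *ᵥ x) ⟨k, i⟩
      = c * ∑ z, x z + (b k - c) * ∑ j, x ⟨k, j⟩ + (1 - b k) * x ⟨k, i⟩ := by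
  have hsplit : ∀ z : Σ k, m k, blockCorrMatrix b c ⟨k, i⟩ z
      = c + (if k = z.1 then b k - c else 0) + (if ⟨k, i⟩ = z then 1 - b k else 0) := by
    rintro ⟨l, j⟩
    simp only [blockCorrMatrix, of_apply]
    split_ifs <;> simp_all
  have hblock : ∑ z : Σ k, m k, (if k = z.1 then b k - c else 0) * x z
      = (b k - c) * ∑ j, x ⟨k, j⟩ := by
    rw [Fintype.sum_sigma, Fintype.sum_eq_single k fun l hl => by simp [Ne.symm hl]]
    simp [mul_sum]
  simp only [mulVec, dotProduct, hsplit, add_mul, sum_add_distrib]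
  rw [hblock]
  simp only [← mul_sum, ite_mul, zero_mul, sum_ite_eq, mem_univ, if_true]

theorem dotProduct_blockCorrMatrix_mulVec (b : κ → ℝ) (c : ℝ) (x : (Σ k, m k) → ℝ) :
    x ⬝ᵥ (blockCorrMatrix b c *ᵥ x)
      = ∑ k, equicorrForm (b k) c (fun i => x ⟨k, i⟩) + c * (∑ k, ∑ i, x ⟨k, i⟩) ^ 2 := by
  have hblock : ∀ k, ∑ i, x ⟨k, i⟩ * (blockCorrMatrix b c *ᵥ x) ⟨k, i⟩
      = c * (∑ z, x z) * ∑ i, x ⟨k, i⟩ + equicorrForm (b k) c (fun i => x ⟨k, i⟩) := by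
    intro k
    simp only [blockCorrMatrix_mulVec, mul_add, sum_add_distrib]
    rw [← sum_mul, ← sum_mul]
    simp only [equicorrForm, mul_left_comm (x _) (1 - b k), ← mul_sum, ← sq]
    ring
  rw [dotProduct, Fintype.sum_sigma, sum_congr rfl fun k _ => hblock k, sum_add_distrib,
    ← mul_sum, Fintype.sum_sigma]
  ring

theorem blockCorrMatrix_posDef {b : κ → ℝ} {c e : ℝ} (hb : ∀ k, b k < 1)
    (he : ∀ k, e * Fintype.card (m k) < 1 + (Fintype.card (m k) - 1) * b k)
    (hce : c ≤ e) (hpe : -(Fintype.card κ - 1) * c ≤ e) :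
    (blockCorrMatrix (m := m) b c).PosDef := by
  refine .of_dotProduct_mulVec_pos (blockCorrMatrix_isHermitian b c) fun x hx => ?_
  obtain ⟨⟨k, i⟩, hki⟩ := Function.ne_iff.mp hx
  have hxk : (fun i => x ⟨k, i⟩) ≠ 0 := Function.ne_iff.mpr ⟨i, hki⟩
  have hpos : 0 < ∑ l, equicorrForm (b l) e (fun i => x ⟨l, i⟩) :=
    sum_pos' (fun l _ => equicorrForm_nonneg (hb l) (he l) _)
      ⟨k, mem_univ k, equicorrForm_pos (hb k) (he k) hxk⟩
  have hshift : ∀ l, equicorrForm (b l) c (fun i => x ⟨l, i⟩)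
      = equicorrForm (b l) e (fun i => x ⟨l, i⟩) + (e - c) * (∑ i, x ⟨l, i⟩) ^ 2 := by
    intro l
    simp only [equicorrForm]
    ring
  have hcoupling := sub_mul_sum_sq_le_mul_sq_sum hce hpe fun l => ∑ i, x ⟨l, i⟩
  rw [star_trivial, dotProduct_blockCorrMatrix_mulVec]
  simp only [hshift, sum_add_distrib, ← mul_sum]
  linarith

end BlockCorrelation

open Matrix in
theorem blockClassI_sufficient_general (p : ℕ) (hp : 2 ≤ p) (n : Fin p → ℕ)
    (hn : ∀ k, 1 ≤ n k)
    (b : Fin p → ℝ) (hb : ∀ k, -1 < b k ∧ b k < 1)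
    (c : ℝ)
    (A : Matrix ((k : Fin p) × Fin (n k)) ((k : Fin p) × Fin (n k)) ℝ)
    (hA : ∀ x y : (k : Fin p) × Fin (n k),
      A x y = if x = y then 1 else if x.1 = y.1 then b x.1 else c)
    (α : Fin p → ℝ) (hα : ∀ k, α k = (1 + ((n k : ℝ) - 1) * b k) / (n k : ℝ))
    (αstar : ℝ) (hαstar : (∀ k, αstar ≤ α k) ∧ ∃ k, αstar = α k)
    (h2 : -αstar / ((p : ℝ) - 1) < c ∧ c < αstar) :
    A.PosDef := by
  obtain rfl : A = blockCorrMatrix b c := ext hA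
  have hp1 : (0 : ℝ) < p - 1 := by
    have : (2 : ℝ) ≤ p := by exact_mod_cast hp
    linarith
  have he : max c (-((p : ℝ) - 1) * c) < αstar := by
    have := (div_lt_iff₀ hp1).1 h2.1
    exact max_lt h2.2 (by linarith)
  refine blockCorrMatrix_posDef (e := max c (-((p : ℝ) - 1) * c)) (fun k => (hb k).2)
    (fun k => ?_) (le_max_left _ _) (by rw [Fintype.card_fin]; exact le_max_right _ _)
  have hnk : (0 : ℝ) < n k := by exact_mod_cast hn k
  rw [Fintype.card_fin, ← lt_div_iff₀ hnk, ← hα k]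
  exact he.trans_le (hαstar.1 k)

open Matrix in
/-- Corollary 2 (sufficient condition on `B_I(p)`): for the block correlation
matrix `A` with within-group correlations `b_k` and common between-group
correlation `c`, if `0 < α_k < 1` for all `k` and `-α*/(p-1) < c < α*` where
`α* = min_k α_k`, then `A` is positive definite. -/
theorem blockClassI_sufficient (p : ℕ) (hp : 2 ≤ p) (n : Fin p → ℕ)
    (hn : ∀ k, 1 ≤ n k)
    (b : Fin p → ℝ) (hb : ∀ k, -1 < b k ∧ b k < 1) (hb1 : ∀ k, n k = 1 → b k = 0)
    (c : ℝ) (hc : -1 < c ∧ c < 1)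
    (A : Matrix ((k : Fin p) × Fin (n k)) ((k : Fin p) × Fin (n k)) ℝ)
    (hA : ∀ x y : (k : Fin p) × Fin (n k),
      A x y = if x = y then 1 else if x.1 = y.1 then b x.1 else c)
    (α : Fin p → ℝ) (hα : ∀ k, α k = (1 + ((n k : ℝ) - 1) * b k) / (n k : ℝ))
    (αstar : ℝ) (hαstar : (∀ k, αstar ≤ α k) ∧ ∃ k, αstar = α k)
    (h1 : ∀ k, 0 < α k ∧ α k < 1)
    (h2 : -αstar / ((p : ℝ) - 1) < c ∧ c < αstar) :
    A.PosDef :=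
  blockClassI_sufficient_general p hp n hn b hb c A hA α hα αstar hαstar h2
end
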